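/- arXiv:2605.10091 — 2 statements merged into one kernel-verified Lean document; each statement's English description precedes it below -/
import Mathlib

section
/- Fix a function φ : ℝ → ℝ, levels 0,…,L with cell counts n₀,…,n_L and feature dimensions d₀,…,d_L, incidence matrices B_i ∈ Matrix (Fin n_i) (Fin n_{i+1}) ℝ for i = 0,…,L−1, and weight matrices W↑_i ∈ Matrix (Fin d_i) (Fin d_{i+1}) ℝ, W↓_i ∈ Matrix (Fin d_{i+1}) (Fin d_i) ℝ, W_b ∈ Matrix (Fin d_L) (Fin d_L) ℝ, W^m_i ∈ Matrix (Fin d_i) (Fin d_i) ℝ. Define the canonical TopoU-Net on input H ∈ Matrix (Fin n₀) (Fin d₀) ℝ by E_0 = H, E_{i+1} = φ[B_iᵀ * E_i * W↑_i], D_L = φ[E_L * W_b], D̃_i = φ[B_i * D_{i+1} * W↓_i], and D_i = φ[(E_i + D̃_i) * W^m_i] for i = L−1,…,0. Fix permutations σ_i of Fin n_i for each level. Then the network obtained by replacing the input H with P_{σ_0} * H and each incidence matrix B_i with P_{σ_i} * B_i * P_{σ_{i+1}}ᵀ (consistent reindexing of cells) produces, at every level i, encoder state P_{σ_i} * E_i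 and decoder state P_{σ_i} * D_i; in particular its output equals P_{σ_0} * D_0. -/
/-!
Each layer of the network is built from left multiplications by incidence matrices, right
multiplications by weights, sums and entrywise maps. Reindexing cells by `P_σ` commutes with
right multiplication, sums and entrywise maps, and a reindexed incidence matrix
`P_σ B P_τᵀ` carries `P_τ`-permuted cochains to `P_σ`-permuted ones (and its transpose the
other way) because `P_τᵀ P_τ = 1`. So every layer is equivariant, and the claim follows by
induction up the encoder and then down the decoder.
-/

open Matrix

/-- The `n × n` permutation matrix of a permutation `σ` of `Fin n`:
left multiplication by `permMat σ` permutes rows according to `σ`. -/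
noncomputable def permMat {n : ℕ} (σ : Equiv.Perm (Fin n)) : Matrix (Fin n) (Fin n) ℝ :=
  fun i j => if σ j = i then 1 else 0

section PermMat

variable {n m : ℕ}

theorem permMat_eq_permMatrix (σ : Equiv.Perm (Fin n)) : permMat σ = σ⁻¹.permMatrix ℝ := by
  ext i j
  simp [permMat, PEquiv.toMatrix_apply, Equiv.eq_symm_apply, eq_comm]

theorem permMat_mul_eq_submatrix (σ : Equiv.Perm (Fin n)) (M : Matrix (Fin n) (Fin m) ℝ) :
    permMat σ * M = M.submatrix σ.symm id := by
  rw [permMat_eq_permMatrix, PEquiv.toMatrix_toPEquiv_mul, Equiv.Perm.inv_def]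

theorem transpose_permMat_mul_permMat (σ : Equiv.Perm (Fin n)) :
    (permMat σ)ᵀ * permMat σ = 1 := by
  rw [permMat_eq_permMatrix, transpose_permMatrix, inv_inv, ← permMatrix_mul, inv_mul_cancel,
    permMatrix_one]

theorem map_permMat_mul (φ : ℝ → ℝ) (σ : Equiv.Perm (Fin n)) (M : Matrix (Fin n) (Fin m) ℝ) :
    (permMat σ * M).map φ = permMat σ * M.map φ := by
  rw [permMat_mul_eq_submatrix, permMat_mul_eq_submatrix, submatrix_map]

end PermMat

section Layers

variable {a b c e : ℕ} (φ : ℝ → ℝ) (σ : Equiv.Perm (Fin a)) (τ : Equiv.Perm (Fin b))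

theorem transpose_conj_permMat_mul_permMat_mul (B : Matrix (Fin a) (Fin b) ℝ)
    (X : Matrix (Fin a) (Fin c) ℝ) :
    (permMat σ * B * (permMat τ)ᵀ)ᵀ * (permMat σ * X) = permMat τ * (Bᵀ * X) := by
  rw [transpose_mul, transpose_mul, transpose_transpose, Matrix.mul_assoc, Matrix.mul_assoc,
    ← Matrix.mul_assoc (permMat σ)ᵀ, transpose_permMat_mul_permMat, Matrix.one_mul]

theorem conj_permMat_mul_permMat_mul (B : Matrix (Fin a) (Fin b) ℝ)
    (Y : Matrix (Fin b) (Fin c) ℝ) :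
    permMat σ * B * (permMat τ)ᵀ * (permMat τ * Y) = permMat σ * (B * Y) := by
  rw [Matrix.mul_assoc, ← Matrix.mul_assoc (permMat τ)ᵀ, transpose_permMat_mul_permMat,
    Matrix.one_mul, Matrix.mul_assoc]

theorem bottleneck_equivariant (X : Matrix (Fin a) (Fin c) ℝ) (W : Matrix (Fin c) (Fin e) ℝ) :
    (permMat σ * X * W).map φ = permMat σ * (X * W).map φ := by
  rw [Matrix.mul_assoc, map_permMat_mul]

theorem encoder_step_equivariant (B : Matrix (Fin a) (Fin b) ℝ) (X : Matrix (Fin a) (Fin c) ℝ)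
    (W : Matrix (Fin c) (Fin e) ℝ) :
    ((permMat σ * B * (permMat τ)ᵀ)ᵀ * (permMat σ * X) * W).map φ =
      permMat τ * (Bᵀ * X * W).map φ := by
  rw [transpose_conj_permMat_mul_permMat_mul, bottleneck_equivariant]

theorem decoder_step_equivariant (B : Matrix (Fin a) (Fin b) ℝ) (X : Matrix (Fin a) (Fin c) ℝ)
    (Y : Matrix (Fin b) (Fin e) ℝ) (Wdown : Matrix (Fin e) (Fin c) ℝ)
    (Wm : Matrix (Fin c) (Fin c) ℝ) :
    ((permMat σ * X + (permMat σ * B * (permMat τ)ᵀ * (permMat τ * Y) * Wdown).map φ) * Wm).map φ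
      = permMat σ * ((X + (B * Y * Wdown).map φ) * Wm).map φ := by
  rw [conj_permMat_mul_permMat_mul, bottleneck_equivariant, ← Matrix.mul_add,
    bottleneck_equivariant]

end Layers

/-- The canonical TopoU-Net (incidence convolution with
pointwise nonlinearity `φ`, pointwise bottleneck map, additive skip merges) is
equivariant under consistent reindexing of cells: replacing the input `H` by
`permMat (σ 0) * H` and each incidence matrix `B i` by
`permMat (σ i) * B i * (permMat (σ (i+1)))ᵀ` produces, at every level `i`,
encoder state `permMat (σ i) * E i` and decoder state `permMat (σ i) * D i`;
in particular the output equals `permMat (σ 0) * D 0`. -/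
theorem canonical_topoUNet_equivariance (φ : ℝ → ℝ) (L : ℕ) (n d : ℕ → ℕ)
    (B : ∀ i : ℕ, Matrix (Fin (n i)) (Fin (n (i + 1))) ℝ)
    (Wup : ∀ i : ℕ, Matrix (Fin (d i)) (Fin (d (i + 1))) ℝ)
    (Wdown : ∀ i : ℕ, Matrix (Fin (d (i + 1))) (Fin (d i)) ℝ)
    (Wb : Matrix (Fin (d L)) (Fin (d L)) ℝ)
    (Wm : ∀ i : ℕ, Matrix (Fin (d i)) (Fin (d i)) ℝ)
    (σ : ∀ i : ℕ, Equiv.Perm (Fin (n i)))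
    (H : Matrix (Fin (n 0)) (Fin (d 0)) ℝ)
    -- the run of the canonical network with incidence matrices B i on input H
    (E D : ∀ i : ℕ, Matrix (Fin (n i)) (Fin (d i)) ℝ)
    (hE0 : E 0 = H)
    (hE : ∀ i, i < L → E (i + 1) = ((B i)ᵀ * E i * Wup i).map φ)
    (hDL : D L = (E L * Wb).map φ)
    (hD : ∀ i, i < L →
      D i = ((E i + (B i * D (i + 1) * Wdown i).map φ) * Wm i).map φ)
    -- the run with reindexed input and reindexed incidence matrices
    (E' D' : ∀ i : ℕ, Matrix (Fin (n i)) (Fin (d i)) ℝ)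
    (hE0' : E' 0 = permMat (σ 0) * H)
    (hE' : ∀ i, i < L → E' (i + 1) =
      ((permMat (σ i) * B i * (permMat (σ (i + 1)))ᵀ)ᵀ * E' i * Wup i).map φ)
    (hDL' : D' L = (E' L * Wb).map φ)
    (hD' : ∀ i, i < L → D' i =
      ((E' i + ((permMat (σ i) * B i * (permMat (σ (i + 1)))ᵀ) * D' (i + 1) * Wdown i).map φ)
        * Wm i).map φ) :
    (∀ i, i ≤ L → E' i = permMat (σ i) * E i) ∧
    (∀ i, i ≤ L → D' i = permMat (σ i) * D i) ∧
    D' 0 = permMat (σ 0) * D 0 := by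
  have encoder : ∀ i, i ≤ L → E' i = permMat (σ i) * E i := by
    intro i
    induction i with
    | zero => intro _; rw [hE0', hE0]
    | succ i ih =>
      intro hi
      rw [hE' i hi, hE i hi, ih (Nat.le_of_succ_le hi), encoder_step_equivariant]
  have decoder : ∀ i, i ≤ L → D' i = permMat (σ i) * D i := by
    intro i hi
    induction hi using Nat.decreasingInduction with
    | self => rw [hDL', hDL, encoder L le_rfl, bottleneck_equivariant]
    | of_succ i hi ih => rw [hD' i hi, hD i hi, ih, encoder i hi.le, decoder_step_equivariant]
  exact ⟨encoder, decoder, decoder 0 L.zero_le⟩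
end

section
/- Let n, m, d, e, d' be positive integers, let R : Fin n → Fin m → Prop be a decidable incidence relation between lower-rank and higher-rank cells, let a : (Fin d → ℝ) → (Fin e → ℝ) → ℝ be a shared scoring function, and fix W ∈ Matrix (Fin d) (Fin d') ℝ and φ : ℝ → ℝ. Define the attention-weighted incidence transport T(R, H, G) ∈ Matrix (Fin m) (Fin d') ℝ by T(R, H, G) j k = φ (∑ over i with R i j of a (H i) (G j) * (H * W) i k), for H ∈ Matrix (Fin n) (Fin d) ℝ and G ∈ Matrix (Fin m) (Fin e) ℝ. Then for all permutations σ of Fin n and τ of Fin m, defining the reindexed relation R' by R' (σ i) (τ j) ↔ R i j, the transport is reindexing-equivariant: T(R', P_σ * H, P_τ * G) = P_τ * T(R, H, G). -/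
open Matrix

/-- Attention-weighted incidence transport: the feature of target cell `j` is
`φ` of the sum, over incident source cells `i` (those with `R i j`), of the
attention weight `a (H i) (G j)` times the transformed source feature
`(H * W) i k`. -/
noncomputable def attnTransport {n m d e d' : ℕ}
    (R : Fin n → Fin m → Prop) [∀ i j, Decidable (R i j)]
    (a : (Fin d → ℝ) → (Fin e → ℝ) → ℝ)
    (W : Matrix (Fin d) (Fin d') ℝ) (φ : ℝ → ℝ)
    (H : Matrix (Fin n) (Fin d) ℝ) (G : Matrix (Fin m) (Fin e) ℝ) :
    Matrix (Fin m) (Fin d') ℝ :=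
  fun j k => φ (∑ i ∈ Finset.univ.filter (fun i : Fin n => R i j),
    a (H i) (G j) * (H * W) i k)

lemma permMat_eq_permMatrix_inv {n : ℕ} (σ : Equiv.Perm (Fin n)) :
    permMat σ = (σ⁻¹).permMatrix ℝ := by
  ext i j
  simp [permMat, Equiv.Perm.permMatrix, eq_comm, Equiv.eq_symm_apply]

lemma permMat_mul {n : ℕ} {ι : Type*} (σ : Equiv.Perm (Fin n)) (H : Matrix (Fin n) ι ℝ) :
    permMat σ * H = H.submatrix σ.symm id := by
  rw [permMat_eq_permMatrix_inv, Equiv.Perm.permMatrix, PEquiv.toMatrix_toPEquiv_mul]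
  rfl

lemma attnTransport_submatrix {n m d e d' : ℕ}
    (R R' : Fin n → Fin m → Prop) [∀ i j, Decidable (R i j)] [∀ i j, Decidable (R' i j)]
    (a : (Fin d → ℝ) → (Fin e → ℝ) → ℝ) (W : Matrix (Fin d) (Fin d') ℝ) (φ : ℝ → ℝ)
    (σ : Equiv.Perm (Fin n)) (τ : Equiv.Perm (Fin m)) (hR' : ∀ i j, R' (σ i) (τ j) ↔ R i j)
    (H : Matrix (Fin n) (Fin d) ℝ) (G : Matrix (Fin m) (Fin e) ℝ) :
    attnTransport R' a W φ (H.submatrix σ.symm id) (G.submatrix τ.symm id)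
      = (attnTransport R a W φ H G).submatrix τ.symm id := by
  ext j k
  have hHW : H.submatrix σ.symm id * W = (H * W).submatrix σ.symm id :=
    (submatrix_mul H W _ id id Function.bijective_id).symm
  have hGj : G.submatrix τ.symm id j = G (τ.symm j) := rfl
  simp only [attnTransport, submatrix_apply, id, hHW, hGj, Finset.sum_filter]
  congr 1
  -- `a` scores features, not cell indices, so reindexing the sum by `σ` matches it term by term.
  rw [← Equiv.sum_comp σ]
  refine Finset.sum_congr rfl fun i _ => ?_
  have hRij : R' (σ i) j ↔ R i (τ.symm j) := by rw [← hR', Equiv.apply_symm_apply]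
  have hHi : H.submatrix σ.symm id (σ i) = H i := by ext; simp
  simp [hRij, hHi]

theorem attention_transport_equivariant_general (n m d e d' : ℕ)
    (R : Fin n → Fin m → Prop) [∀ i j, Decidable (R i j)]
    (a : (Fin d → ℝ) → (Fin e → ℝ) → ℝ)
    (W : Matrix (Fin d) (Fin d') ℝ) (φ : ℝ → ℝ)
    (σ : Equiv.Perm (Fin n)) (τ : Equiv.Perm (Fin m))
    (R' : Fin n → Fin m → Prop) [∀ i j, Decidable (R' i j)]
    (hR' : ∀ i j, R' (σ i) (τ j) ↔ R i j)
    (H : Matrix (Fin n) (Fin d) ℝ) (G : Matrix (Fin m) (Fin e) ℝ) :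
    attnTransport R' a W φ (permMat σ * H) (permMat τ * G)
      = permMat τ * attnTransport R a W φ H G := by
  simpa only [permMat_mul] using attnTransport_submatrix R R' a W φ σ τ hR' H G

/-- Attention-weighted incidence transport with a shared
scoring function `a` is reindexing-equivariant: for permutations `σ` of the
source cells and `τ` of the target cells, and the reindexed incidence relation
`R'` with `R' (σ i) (τ j) ↔ R i j`,
`T(R', P_σ * H, P_τ * G) = P_τ * T(R, H, G)`. -/
theorem attention_transport_equivariant (n m d e d' : ℕ)
    (hn : 0 < n) (hm : 0 < m) (hd : 0 < d) (he : 0 < e) (hd' : 0 < d')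
    (R : Fin n → Fin m → Prop) [∀ i j, Decidable (R i j)]
    (a : (Fin d → ℝ) → (Fin e → ℝ) → ℝ)
    (W : Matrix (Fin d) (Fin d') ℝ) (φ : ℝ → ℝ)
    (σ : Equiv.Perm (Fin n)) (τ : Equiv.Perm (Fin m))
    (R' : Fin n → Fin m → Prop) [∀ i j, Decidable (R' i j)]
    (hR' : ∀ i j, R' (σ i) (τ j) ↔ R i j)
    (H : Matrix (Fin n) (Fin d) ℝ) (G : Matrix (Fin m) (Fin e) ℝ) :
    attnTransport R' a W φ (permMat σ * H) (permMat τ * G)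
      = permMat τ * attnTransport R a W φ H G :=
  attention_transport_equivariant_general n m d e d' R a W φ σ τ R' hR' H G
end
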